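/- Suppose Y and X are conditionally independent given BᵀX. Then for each fixed 0 < τ < 1 the conditional expectile f_τ(X) is almost surely equal to a Borel-measurable function of BᵀX: there exists Borel g : ℝ^d → ℝ with f_τ(X) = g(BᵀX) a.s., where g(w) is the unique minimizer over a ∈ ℝ of ∫ φ_τ(y − a) κ_B(w)(dy) and κ_B is a regular conditional distribution of Y given BᵀX. -/

import Mathlib

/-!
An expectile `a` of `ν` is characterised by the first-order condition `∫ ψ_τ (y - a) dν = 0`,
and the mean score `b ↦ ∫ ψ_τ (y - b) dν` is strictly decreasing. Hence the expectile is the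
supremum of the `b` at which the mean score is nonnegative; testing this at rational `b` shows
that it depends measurably on `w` when `ν = κ w` for a kernel `κ`. Conditional independence
makes the conditional law of `Y` given `X` almost surely equal to its law given `BᵀX`, so
`f_τ(X)` is almost surely this supremum computed from the law of `Y` given `BᵀX`, at `BᵀX`.
-/

open MeasureTheory ProbabilityTheory Matrix

/-- The asymmetric squared-error loss `φ_τ`. -/
noncomputable def phiLoss (τ c : ℝ) : ℝ := if c ≤ 0 then (1 - τ) * c ^ 2 else τ * c ^ 2

/-- `a` is the `τ`-th expectile of the measure `ν`: it is the unique minimizer of the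
asymmetric squared-error risk `b ↦ ∫ φ_τ(y - b) ν(dy)`. -/
def IsExpectile (τ : ℝ) (ν : MeasureTheory.Measure ℝ) (a : ℝ) : Prop :=
  ∀ b : ℝ, b ≠ a → ∫ y, phiLoss τ (y - a) ∂ν < ∫ y, phiLoss τ (y - b) ∂ν

/-- `ψ_τ = φ_τ' / 2`. -/
noncomputable def expectileScore (τ c : ℝ) : ℝ := if c ≤ 0 then (1 - τ) * c else τ * c

section Pointwise

variable {τ : ℝ}

lemma measurable_phiLoss (τ : ℝ) : Measurable (phiLoss τ) :=
  Measurable.ite measurableSet_Iic (by fun_prop) (by fun_prop)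

lemma measurable_expectileScore (τ : ℝ) : Measurable (expectileScore τ) :=
  Measurable.ite measurableSet_Iic (by fun_prop) (by fun_prop)

lemma phiLoss_nonneg (hτ0 : 0 ≤ τ) (hτ1 : τ ≤ 1) (c : ℝ) : 0 ≤ phiLoss τ c := by
  unfold phiLoss; split_ifs <;> nlinarith [sq_nonneg c]

lemma phiLoss_le_sq (hτ0 : 0 ≤ τ) (hτ1 : τ ≤ 1) (c : ℝ) : phiLoss τ c ≤ c ^ 2 := by
  unfold phiLoss; split_ifs <;> nlinarith [sq_nonneg c]

lemma min_mul_sq_le_phiLoss (c : ℝ) : min τ (1 - τ) * c ^ 2 ≤ phiLoss τ c := by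
  unfold phiLoss
  split_ifs <;> nlinarith [sq_nonneg c, min_le_left τ (1 - τ), min_le_right τ (1 - τ)]

lemma abs_expectileScore_le (hτ0 : 0 ≤ τ) (hτ1 : τ ≤ 1) (c : ℝ) :
    |expectileScore τ c| ≤ |c| := by
  unfold expectileScore
  split_ifs <;> rw [abs_mul] <;>
    exact mul_le_of_le_one_left (abs_nonneg c) (abs_le.2 ⟨by linarith, by linarith⟩)

lemma min_mul_abs_le_abs_expectileScore (c : ℝ) :
    min τ (1 - τ) * |c| ≤ |expectileScore τ c| := by
  unfold expectileScore
  split_ifs <;> rw [abs_mul]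
  exacts [mul_le_mul_of_nonneg_right ((min_le_right _ _).trans (le_abs_self _)) (abs_nonneg c),
    mul_le_mul_of_nonneg_right ((min_le_left _ _).trans (le_abs_self _)) (abs_nonneg c)]

lemma phiLoss_add_le (c h : ℝ) :
    phiLoss τ (c + h) ≤ phiLoss τ c + 2 * h * expectileScore τ c + max τ (1 - τ) * h ^ 2 := by
  have hM₁ : 0 ≤ max τ (1 - τ) - τ := sub_nonneg.2 (le_max_left _ _)
  have hM₂ : 0 ≤ max τ (1 - τ) - (1 - τ) := sub_nonneg.2 (le_max_right _ _)
  unfold phiLoss expectileScore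
  split_ifs with hch hc hc
  · nlinarith [mul_nonneg hM₂ (sq_nonneg h)]
  · nlinarith [mul_nonneg hM₁ (mul_nonneg (le_of_not_ge hc) (by linarith : 0 ≤ c - 2 * (c + h))),
      mul_nonneg hM₂ (sq_nonneg (c + h))]
  · nlinarith [mul_nonneg hM₂ (mul_nonneg (neg_nonneg.2 hc) (by linarith : 0 ≤ 2 * h + c)),
      mul_nonneg hM₁ (sq_nonneg (c + h))]
  · nlinarith [mul_nonneg hM₁ (sq_nonneg h)]

lemma le_phiLoss_add (c h : ℝ) :
    phiLoss τ c + 2 * h * expectileScore τ c + min τ (1 - τ) * h ^ 2 ≤ phiLoss τ (c + h) := by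
  have hm₁ : 0 ≤ τ - min τ (1 - τ) := sub_nonneg.2 (min_le_left _ _)
  have hm₂ : 0 ≤ (1 - τ) - min τ (1 - τ) := sub_nonneg.2 (min_le_right _ _)
  unfold phiLoss expectileScore
  split_ifs with hc hch hch
  · nlinarith [mul_nonneg hm₂ (sq_nonneg h)]
  · nlinarith [mul_nonneg hm₂ (mul_nonneg (neg_nonneg.2 hc) (by linarith : 0 ≤ 2 * h + c)),
      mul_nonneg hm₁ (sq_nonneg (c + h))]
  · nlinarith [mul_nonneg hm₁ (mul_nonneg (le_of_not_ge hc) (by linarith : 0 ≤ -(2 * h + c))),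
      mul_nonneg hm₂ (sq_nonneg (c + h))]
  · nlinarith [mul_nonneg hm₁ (sq_nonneg h)]

lemma expectileScore_add_le {c h : ℝ} (hh : 0 ≤ h) :
    expectileScore τ c + min τ (1 - τ) * h ≤ expectileScore τ (c + h) := by
  unfold expectileScore
  split_ifs <;> nlinarith [min_le_left τ (1 - τ), min_le_right τ (1 - τ)]

end Pointwise

section Integral

variable {τ : ℝ} {ν : Measure ℝ} [IsProbabilityMeasure ν]

lemma integrable_phiLoss_sub (hτ0 : 0 ≤ τ) (hτ1 : τ ≤ 1) (hν : Integrable (fun y => y ^ 2) ν)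
    (b : ℝ) : Integrable (fun y => phiLoss τ (y - b)) ν := by
  have hsub : MemLp (fun y => y - b) 2 ν :=
    ((memLp_two_iff_integrable_sq aestronglyMeasurable_id).2 hν).sub (memLp_const b)
  refine hsub.integrable_sq.mono
    ((measurable_phiLoss τ).comp (measurable_sub_const b)).aestronglyMeasurable
    (ae_of_all _ fun y => ?_)
  rw [Real.norm_of_nonneg (phiLoss_nonneg hτ0 hτ1 _), Real.norm_of_nonneg (sq_nonneg _)]
  exact phiLoss_le_sq hτ0 hτ1 _

lemma integrable_expectileScore_sub (hτ0 : 0 ≤ τ) (hτ1 : τ ≤ 1) (hν : Integrable id ν) (b : ℝ) :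
    Integrable (fun y => expectileScore τ (y - b)) ν :=
  (hν.sub (integrable_const b)).mono
    ((measurable_expectileScore τ).comp (measurable_sub_const b)).aestronglyMeasurable
    (ae_of_all _ fun y => abs_expectileScore_le hτ0 hτ1 (y - b))

lemma integral_expectileScore_sub_add_le (hτ0 : 0 ≤ τ) (hτ1 : τ ≤ 1) (hν : Integrable id ν)
    {a b : ℝ} (hab : a ≤ b) :
    ∫ y, expectileScore τ (y - b) ∂ν + min τ (1 - τ) * (b - a) ≤
      ∫ y, expectileScore τ (y - a) ∂ν := by
  calc ∫ y, expectileScore τ (y - b) ∂ν + min τ (1 - τ) * (b - a)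
      = ∫ y, (expectileScore τ (y - b) + min τ (1 - τ) * (b - a)) ∂ν := by
        rw [integral_add (integrable_expectileScore_sub hτ0 hτ1 hν b) (integrable_const _),
          integral_const, probReal_univ, one_smul]
    _ ≤ ∫ y, expectileScore τ (y - a) ∂ν :=
        integral_mono ((integrable_expectileScore_sub hτ0 hτ1 hν b).add (integrable_const _))
          (integrable_expectileScore_sub hτ0 hτ1 hν a) fun y => by
            simpa using expectileScore_add_le (c := y - b) (sub_nonneg.2 hab)

lemma integrable_id_of_integrable_sq (hν : Integrable (fun y => y ^ 2) ν) : Integrable id ν :=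
  ((memLp_two_iff_integrable_sq aestronglyMeasurable_id).2 hν).integrable one_le_two

lemma integral_phiLoss_sub_le (hτ0 : 0 ≤ τ) (hτ1 : τ ≤ 1) (hν : Integrable (fun y => y ^ 2) ν)
    (a b : ℝ) :
    ∫ y, phiLoss τ (y - b) ∂ν ≤ ∫ y, phiLoss τ (y - a) ∂ν +
      2 * (a - b) * ∫ y, expectileScore τ (y - a) ∂ν + max τ (1 - τ) * (a - b) ^ 2 := by
  have hφ := integrable_phiLoss_sub hτ0 hτ1 hν a
  have hψ := (integrable_expectileScore_sub hτ0 hτ1 (integrable_id_of_integrable_sq hν) a).const_mul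
    (2 * (a - b))
  calc ∫ y, phiLoss τ (y - b) ∂ν
      ≤ ∫ y, (phiLoss τ (y - a) + 2 * (a - b) * expectileScore τ (y - a) +
          max τ (1 - τ) * (a - b) ^ 2) ∂ν :=
        integral_mono (integrable_phiLoss_sub hτ0 hτ1 hν b) ((hφ.add hψ).add (integrable_const _))
          fun y => by simpa using phiLoss_add_le (y - a) (a - b)
    _ = _ := by
        rw [integral_add ?_ (integrable_const _), integral_add hφ hψ, integral_const_mul,
          integral_const, probReal_univ, one_smul]
        exact hφ.add hψ

lemma le_integral_phiLoss_sub (hτ0 : 0 ≤ τ) (hτ1 : τ ≤ 1) (hν : Integrable (fun y => y ^ 2) ν)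
    (a b : ℝ) :
    ∫ y, phiLoss τ (y - a) ∂ν + 2 * (a - b) * ∫ y, expectileScore τ (y - a) ∂ν +
      min τ (1 - τ) * (a - b) ^ 2 ≤ ∫ y, phiLoss τ (y - b) ∂ν := by
  have hφ := integrable_phiLoss_sub hτ0 hτ1 hν a
  have hψ := (integrable_expectileScore_sub hτ0 hτ1 (integrable_id_of_integrable_sq hν) a).const_mul
    (2 * (a - b))
  calc _ = ∫ y, (phiLoss τ (y - a) + 2 * (a - b) * expectileScore τ (y - a) +
          min τ (1 - τ) * (a - b) ^ 2) ∂ν := by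
        rw [integral_add ?_ (integrable_const _), integral_add hφ hψ, integral_const_mul,
          integral_const, probReal_univ, one_smul]
        exact hφ.add hψ
    _ ≤ ∫ y, phiLoss τ (y - b) ∂ν :=
        integral_mono ((hφ.add hψ).add (integrable_const _)) (integrable_phiLoss_sub hτ0 hτ1 hν b)
          fun y => by simpa using le_phiLoss_add (y - a) (a - b)

end Integral

section IsExpectile

variable {τ : ℝ} {ν : Measure ℝ} [IsProbabilityMeasure ν] {a : ℝ}

/-- Without a finite second moment every risk `∫ φ_τ (y - b) dν` is the junk value `0` of a
non-integrable Bochner integral, so no strict minimizer exists. -/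
lemma IsExpectile.integrable_sq (hτ0 : 0 < τ) (hτ1 : τ < 1) (hE : IsExpectile τ ν a) :
    Integrable (fun y => y ^ 2) ν := by
  have hm : 0 < min τ (1 - τ) := lt_min hτ0 (by linarith)
  have hsq_of_risk (b : ℝ) (hb : Integrable (fun y => phiLoss τ (y - b)) ν) :
      Integrable (fun y => y ^ 2) ν := by
    have hsub : Integrable (fun y => (y - b) ^ 2) ν :=
      (hb.const_mul (min τ (1 - τ))⁻¹).mono (by fun_prop) (ae_of_all _ fun y => by
        rw [Real.norm_of_nonneg (sq_nonneg _), Real.norm_of_nonneg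
          (mul_nonneg (inv_nonneg.2 hm.le) (phiLoss_nonneg hτ0.le hτ1.le _)), inv_mul_eq_div,
          le_div_iff₀' hm]
        exact min_mul_sq_le_phiLoss _)
    simpa using ((memLp_two_iff_integrable_sq (by fun_prop)).2 hsub).add (memLp_const b)
      |>.integrable_sq
  by_contra h
  have hE' := hE (a + 1) (by simp)
  rw [integral_undef fun hb => h (hsq_of_risk a hb),
    integral_undef fun hb => h (hsq_of_risk (a + 1) hb)] at hE'
  exact lt_irrefl 0 hE'

lemma isExpectile_iff (hτ0 : 0 < τ) (hτ1 : τ < 1) :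
    IsExpectile τ ν a ↔
      Integrable (fun y => y ^ 2) ν ∧ ∫ y, expectileScore τ (y - a) ∂ν = 0 := by
  refine ⟨fun hE => ⟨hE.integrable_sq hτ0 hτ1, ?_⟩, fun ⟨hν, hψ⟩ b hb => ?_⟩
  · set G := ∫ y, expectileScore τ (y - a) ∂ν
    set M := max τ (1 - τ)
    have hM : 0 < M := lt_max_of_lt_left hτ0
    by_contra hG
    -- moving from `a` to `a + G / M` lowers the risk by at least `G ^ 2 / M`
    have hlt := hE (a + G / M) (by simpa using div_ne_zero hG hM.ne')
    have hle := integral_phiLoss_sub_le hτ0.le hτ1.le (hE.integrable_sq hτ0 hτ1) a (a + G / M)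
    have hstep : 2 * (a - (a + G / M)) * G + M * (a - (a + G / M)) ^ 2 = -(G ^ 2 / M) := by
      field_simp; ring
    have : 0 < G ^ 2 / M := div_pos (pow_two_pos_of_ne_zero hG) hM
    linarith
  · have hm : 0 < min τ (1 - τ) := lt_min hτ0 (by linarith)
    have hle := le_integral_phiLoss_sub hτ0.le hτ1.le hν a b
    rw [hψ] at hle
    have : 0 < min τ (1 - τ) * (a - b) ^ 2 :=
      mul_pos hm (pow_two_pos_of_ne_zero (sub_ne_zero.2 hb.symm))
    linarith

end IsExpectile

/-- The mean score `b ↦ ∫ ψ_τ (y - b) dν` is strictly decreasing when `ν` has a finite mean, so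
this is its zero whenever one exists. -/
noncomputable def expectile (τ : ℝ) (ν : Measure ℝ) : ℝ :=
  sSup {b | 0 ≤ ∫ y, expectileScore τ (y - b) ∂ν}

section Expectile

variable {τ : ℝ} {ν : Measure ℝ} [IsProbabilityMeasure ν]

/-- The mean score is then identically the junk value `0`, and `sSup Set.univ = 0` in `ℝ`. -/
lemma expectile_of_not_integrable (hτ0 : 0 < τ) (hτ1 : τ < 1) (hν : ¬Integrable id ν) :
    expectile τ ν = 0 := by
  have hm : 0 < min τ (1 - τ) := lt_min hτ0 (by linarith)
  have hscore (b : ℝ) : ∫ y, expectileScore τ (y - b) ∂ν = 0 := by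
    refine integral_undef fun hψ => hν ?_
    have hsub : Integrable (fun y => y - b) ν :=
      (hψ.const_mul (min τ (1 - τ))⁻¹).mono (by fun_prop) (ae_of_all _ fun y => by
        rw [Real.norm_eq_abs, Real.norm_eq_abs, abs_mul, abs_of_pos (inv_pos.2 hm), inv_mul_eq_div,
          le_div_iff₀' hm]
        exact min_mul_abs_le_abs_expectileScore _)
    exact (hsub.add (integrable_const b)).congr (ae_of_all _ fun y => sub_add_cancel y b)
  simp [expectile, hscore]

lemma exists_integral_expectileScore_sub_nonneg (hτ0 : 0 < τ) (hτ1 : τ < 1)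
    (hν : Integrable id ν) : ∃ b, 0 ≤ ∫ y, expectileScore τ (y - b) ∂ν := by
  have hm : 0 < min τ (1 - τ) := lt_min hτ0 (by linarith)
  set G₀ := ∫ y, expectileScore τ (y - 0) ∂ν
  refine ⟨-(|G₀| / min τ (1 - τ)), ?_⟩
  have h := integral_expectileScore_sub_add_le hτ0.le hτ1.le hν
    (neg_nonpos.2 (div_nonneg (abs_nonneg G₀) hm.le))
  rw [zero_sub, neg_neg, mul_div_cancel₀ _ hm.ne'] at h
  linarith [neg_abs_le G₀]

lemma bddAbove_setOf_integral_expectileScore_sub_nonneg (hτ0 : 0 < τ) (hτ1 : τ < 1)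
    (hν : Integrable id ν) : BddAbove {b | 0 ≤ ∫ y, expectileScore τ (y - b) ∂ν} := by
  have hm : 0 < min τ (1 - τ) := lt_min hτ0 (by linarith)
  set G₀ := ∫ y, expectileScore τ (y - 0) ∂ν
  refine ⟨|G₀| / min τ (1 - τ), fun b hb => not_lt.1 fun hbt => ?_⟩
  have h := integral_expectileScore_sub_add_le hτ0.le hτ1.le hν
    ((div_nonneg (abs_nonneg G₀) hm.le).trans hbt.le)
  rw [div_lt_iff₀' hm] at hbt
  linarith [le_abs_self G₀, hb.out]

lemma expectile_le_iff (hτ0 : 0 < τ) (hτ1 : τ < 1) (hν : Integrable id ν) (t : ℝ) :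
    expectile τ ν ≤ t ↔ ∀ q : ℚ, t < q → ∫ y, expectileScore τ (y - q) ∂ν < 0 := by
  have hm : 0 < min τ (1 - τ) := lt_min hτ0 (by linarith)
  refine ⟨fun H q hq => not_le.1 fun hq0 => ?_, fun H => ?_⟩
  · exact hq.not_ge
      ((le_csSup (bddAbove_setOf_integral_expectileScore_sub_nonneg hτ0 hτ1 hν) hq0).trans H)
  · obtain ⟨b₀, hb₀⟩ := exists_integral_expectileScore_sub_nonneg hτ0 hτ1 hν
    refine csSup_le ⟨b₀, hb₀⟩ fun b hb => not_lt.1 fun hbt => ?_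
    obtain ⟨q, htq, hqb⟩ := exists_rat_btwn hbt
    have h := integral_expectileScore_sub_add_le hτ0.le hτ1.le hν hqb.le
    linarith [H q htq, mul_pos hm (sub_pos.2 hqb), hb.out]

lemma IsExpectile.expectile_eq {a : ℝ} (hτ0 : 0 < τ) (hτ1 : τ < 1) (hE : IsExpectile τ ν a) :
    expectile τ ν = a := by
  have hm : 0 < min τ (1 - τ) := lt_min hτ0 (by linarith)
  obtain ⟨hν, hψ⟩ := (isExpectile_iff hτ0 hτ1).1 hE
  refine IsGreatest.csSup_eq ⟨hψ.ge, fun b hb => not_lt.1 fun hab => ?_⟩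
  have h := integral_expectileScore_sub_add_le hτ0.le hτ1.le (integrable_id_of_integrable_sq hν)
    hab.le
  linarith [mul_pos hm (sub_pos.2 hab), hb.out]

end Expectile

section Kernel

variable {α : Type*} [MeasurableSpace α] {κ : Kernel α ℝ} [IsMarkovKernel κ] {τ : ℝ}

lemma measurable_expectile_kernel (hτ0 : 0 < τ) (hτ1 : τ < 1) :
    Measurable fun w => expectile τ (κ w) := by
  refine measurable_of_Iic fun t => ?_
  have hpre : (fun w => expectile τ (κ w)) ⁻¹' Set.Iic t =
      {w | Integrable id (κ w) ∧ ∀ q : ℚ, t < q → ∫ y, expectileScore τ (y - q) ∂κ w < 0} ∪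
        {w | ¬Integrable id (κ w) ∧ 0 ≤ t} := by
    ext w
    by_cases hw : Integrable id (κ w) <;>
      simp [hw, expectile_le_iff hτ0 hτ1, expectile_of_not_integrable hτ0 hτ1]
  have hI : MeasurableSet {w | Integrable id (κ w)} :=
    ProbabilityTheory.measurableSet_integrable stronglyMeasurable_id
  rw [hpre, Set.ofPred_and, Set.ofPred_and, Set.ofPred_forall]
  refine (hI.inter (MeasurableSet.iInter fun q => ?_)).union (hI.compl.inter (.const _))
  simp only [Set.ofPred_forall]
  exact .iInter fun _ => measurableSet_lt
    (((measurable_expectileScore τ).comp (measurable_sub_const _)).stronglyMeasurable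
      |>.integral_kernel.measurable) measurable_const

lemma measurableSet_isExpectile (hτ0 : 0 < τ) (hτ1 : τ < 1) {g : α → ℝ} (hg : Measurable g) :
    MeasurableSet {w | IsExpectile τ (κ w) (g w)} := by
  simp_rw [isExpectile_iff hτ0 hτ1, Set.ofPred_and]
  refine (ProbabilityTheory.measurableSet_integrable (by fun_prop)).inter
    (measurableSet_eq_fun ?_ measurable_const)
  exact (((measurable_expectileScore τ).comp (measurable_snd.sub (hg.comp measurable_fst)))
    |>.stronglyMeasurable.integral_kernel_prod_right').measurable

end Kernel

section CondDistrib

variable {Ω β γ E : Type*} {mΩ : MeasurableSpace Ω} [MeasurableSpace β] [MeasurableSpace γ]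
  [MeasurableSpace E] [StandardBorelSpace E] [Nonempty E] {μ : Measure Ω} [IsFiniteMeasure μ]
  {X : Ω → β} {Y : Ω → E}

lemma condDistrib_comp_ae_eq_comap {h : β → γ} {r : γ → β} (hh : Measurable h) (hr : Measurable r)
    (hrh : Function.LeftInverse r h) (hX : Measurable X) (hY : AEMeasurable Y μ) :
    condDistrib Y (fun ω => h (X ω)) μ =ᵐ[μ.map fun ω => h (X ω)]
      (condDistrib Y X μ).comap r hr := by
  refine condDistrib_ae_eq_of_measure_eq_compProd _ hY (Measure.ext_prod fun {A S} hA hS => ?_)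
  have hmap : μ.map (fun ω => h (X ω)) = (μ.map X).map h := (Measure.map_map hh hX).symm
  rw [Measure.compProd_apply_prod hA hS, hmap,
    setLIntegral_map hA (Kernel.measurable_coe _ hS) hh]
  simp_rw [Kernel.comap_apply, hrh _]
  rw [← Measure.compProd_apply_prod (hh hA) hS, compProd_map_condDistrib hY,
    Measure.map_apply_of_aemeasurable (hX.aemeasurable.prodMk hY) ((hh hA).prod hS),
    Measure.map_apply_of_aemeasurable (by fun_prop : AEMeasurable (fun ω => (h (X ω), Y ω)) μ)
      (hA.prod hS)]
  rfl

/-- The conditional law of `Y` given `(L X, X)` is its law given `L X` by conditional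
independence, and its law given `X` because `(L X, X)` and `X` determine each other. -/
lemma condDistrib_apply_ae_eq_of_condIndepFun [StandardBorelSpace Ω] [StandardBorelSpace β]
    [Nonempty β] {L : β → γ} (hL : Measurable L) (hX : Measurable X)
    (hY : Measurable Y) {hm : MeasurableSpace.comap (fun ω => L (X ω)) inferInstance ≤ mΩ}
    (hYX : CondIndepFun (MeasurableSpace.comap (fun ω => L (X ω)) inferInstance) hm Y X μ) :
    ∀ᵐ ω ∂μ, condDistrib Y (fun ω => L (X ω)) μ (L (X ω)) = condDistrib Y X μ (X ω) := by
  have hindep := (condIndepFun_iff_condDistrib_prod_ae_eq_prodMkRight hY hX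
    (hL.comp hX)).1 hYX.symm
  have hcomp := condDistrib_comp_ae_eq_comap (h := fun x => (L x, x)) (hL.prodMk measurable_id)
    measurable_snd (fun _ => rfl) hX hY.aemeasurable (μ := μ)
  filter_upwards [ae_of_ae_map (by fun_prop) (hindep.symm.trans hcomp)] with ω hω
  exact hω

end CondDistrib

theorem statement1_general
    {Ω : Type*} [mΩ : MeasurableSpace Ω] [StandardBorelSpace Ω]
    (P : Measure Ω) [IsProbabilityMeasure P]
    {p d : ℕ}
    (X : Ω → Fin p → ℝ) (hXmeas : Measurable X)
    (Y : Ω → ℝ) (hYmeas : Measurable Y)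
    (B : Matrix (Fin p) (Fin d) ℝ)
    (hm : MeasurableSpace.comap (fun ω => Bᵀ.mulVec (X ω)) inferInstance ≤ mΩ)
    (hYX : CondIndepFun (MeasurableSpace.comap (fun ω => Bᵀ.mulVec (X ω)) inferInstance) hm
      Y X P)
    (τ : ℝ) (hτ0 : 0 < τ) (hτ1 : τ < 1)
    (f : (Fin p → ℝ) → ℝ)
    (hexp : ∀ᵐ x ∂(P.map X), IsExpectile τ (condDistrib Y X P x) (f x)) :
    ∃ g : (Fin d → ℝ) → ℝ, Measurable g ∧
      (∀ᵐ ω ∂P, f (X ω) = g (Bᵀ.mulVec (X ω))) ∧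
      (∀ᵐ w ∂(P.map fun ω => Bᵀ.mulVec (X ω)),
        IsExpectile τ (condDistrib Y (fun ω => Bᵀ.mulVec (X ω)) P w) (g w)) := by
  have hL : Measurable fun x : Fin p → ℝ => Bᵀ.mulVec x := by fun_prop
  have hκ := condDistrib_apply_ae_eq_of_condIndepFun hL hXmeas hYmeas hYX
  have hE : ∀ᵐ ω ∂P, IsExpectile τ (condDistrib Y (fun ω => Bᵀ.mulVec (X ω)) P (Bᵀ.mulVec (X ω)))
      (f (X ω)) := by
    filter_upwards [hκ, ae_of_ae_map hXmeas.aemeasurable hexp] with ω hω hfω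
    rwa [hω]
  have hg := measurable_expectile_kernel (κ := condDistrib Y (fun ω => Bᵀ.mulVec (X ω)) P) hτ0 hτ1
  refine ⟨_, hg, ?_, ?_⟩
  · filter_upwards [hE] with ω hω
    exact (hω.expectile_eq hτ0 hτ1).symm
  · rw [ae_map_iff (by fun_prop) (measurableSet_isExpectile hτ0 hτ1 hg)]
    filter_upwards [hE] with ω hω
    rwa [hω.expectile_eq hτ0 hτ1]

/-- If `Y ⫫ X | BᵀX`, then the conditional expectile `f_τ(X)` is almost surely a Borel
function `g` of `BᵀX`, where `g(w)` is the unique minimizer of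
`a ↦ ∫ φ_τ(y − a) κ_B(w)(dy)` and `κ_B` is a regular conditional distribution of `Y`
given `BᵀX`. -/
theorem statement1
    {Ω : Type*} [mΩ : MeasurableSpace Ω] [StandardBorelSpace Ω] [Nonempty Ω]
    (P : Measure Ω) [IsProbabilityMeasure P]
    {p d : ℕ}
    (X : Ω → Fin p → ℝ) (hXmeas : Measurable X) (hX2 : MemLp X 2 P)
    (Y : Ω → ℝ) (hYmeas : Measurable Y) (hY2 : MemLp Y 2 P)
    (B : Matrix (Fin p) (Fin d) ℝ) (hBrank : B.rank = d)
    (hm : MeasurableSpace.comap (fun ω => Bᵀ.mulVec (X ω)) inferInstance ≤ mΩ)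
    (hYX : CondIndepFun (MeasurableSpace.comap (fun ω => Bᵀ.mulVec (X ω)) inferInstance) hm
      Y X P)
    (τ : ℝ) (hτ0 : 0 < τ) (hτ1 : τ < 1)
    (f : (Fin p → ℝ) → ℝ) (hfmeas : Measurable f)
    (hexp : ∀ᵐ x ∂(P.map X), IsExpectile τ (condDistrib Y X P x) (f x)) :
    ∃ g : (Fin d → ℝ) → ℝ, Measurable g ∧
      (∀ᵐ ω ∂P, f (X ω) = g (Bᵀ.mulVec (X ω))) ∧
      (∀ᵐ w ∂(P.map fun ω => Bᵀ.mulVec (X ω)),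
        IsExpectile τ (condDistrib Y (fun ω => Bᵀ.mulVec (X ω)) P w) (g w)) :=
  statement1_general (mΩ := mΩ) P X hXmeas Y hYmeas B hm hYX τ hτ0 hτ1 f hexp
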